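/- No regular real is Kurtz random: if x is a binary sequence such that the real 0.x is regular, then x is not Kurtz random. -/

import Mathlib

open scoped ENNReal

namespace Paper

/-- Prefix of length `m` of the binary sequence `x`. -/
def pre (x : ℕ → Bool) (m : ℕ) : List Bool := List.ofFn (fun i : Fin m => x i)

/-- The real number `0.x` represented by the binary sequence `x`. -/
noncomputable def binVal (x : ℕ → Bool) : ℝ :=
  ∑' i : ℕ, if x i then (2:ℝ) ^ (-((i:ℤ) + 1)) else 0

/-- The real number `x_A = ∑_{j∈A} 2^{-(j+1)}`. -/
noncomputable def xA (A : Set ℕ) : ℝ :=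
  ∑' j : ℕ, A.indicator (fun j => (2:ℝ) ^ (-((j:ℤ) + 1))) j

/-- A set (of a primcodable type) is computably enumerable. -/
def CE {α : Type} [Primcodable α] (p : Set α) : Prop :=
  Partrec fun a => Part.assert (a ∈ p) fun _ => Part.some ()

/-- A real number is left-computable if some computable increasing sequence of
rationals converges to it. -/
def LeftComputable (x : ℝ) : Prop :=
  ∃ q : ℕ → ℚ, Computable q ∧ StrictMono q ∧
    Filter.Tendsto (fun n => (q n : ℝ)) Filter.atTop (nhds x)

/-- A sequence of reals converges computably. -/
def ConvergesComputably (a : ℕ → ℝ) : Prop :=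
  ∃ L : ℝ, Filter.Tendsto a Filter.atTop (nhds L) ∧
    ∃ g : ℕ → ℕ, Computable g ∧ ∀ m n : ℕ, g n ≤ m → |a m - L| ≤ (2:ℝ) ^ (-(n:ℤ))

/-- `u_f(m)` is the number of `k` with `f k = m`. -/
noncomputable def uf (f : ℕ → ℕ) (m : ℕ) : ℕ := Nat.card {k : ℕ // f k = m}

/-- A real number is reordered computable. -/
def ReorderedComputable (x : ℝ) : Prop :=
  ∃ f : ℕ → ℕ, Computable f ∧ HasSum (fun k => (2:ℝ) ^ (-(f k : ℤ))) x ∧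
    ConvergesComputably (fun N => ∑ m ∈ Finset.range N, (uf f m : ℝ) * (2:ℝ) ^ (-(m:ℤ)))

/-- A prefix-free machine: a computable partial function on binary strings with
prefix-free domain. -/
def PFMachine (M : List Bool →. List Bool) : Prop :=
  Partrec M ∧ ∀ σ τ : List Bool, σ ∈ M.Dom → τ ∈ M.Dom → σ <+: τ → σ = τ

/-- The Kolmogorov complexity of `τ` with respect to the machine `M`. -/
noncomputable def KM (M : List Bool →. List Bool) (τ : List Bool) : ℕ∞ :=
  sInf {n : ℕ∞ | ∃ σ : List Bool, τ ∈ M σ ∧ (σ.length : ℕ∞) = n}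

/-- An optimal prefix-free machine. -/
def OptimalPF (U : List Bool →. List Bool) : Prop :=
  PFMachine U ∧ ∀ M : List Bool →. List Bool, PFMachine M →
    ∃ c : ℕ, ∀ τ : List Bool, KM U τ ≤ KM M τ + (c : ℕ∞)

/-- Strongly Kurtz random with respect to the (optimal) machine `U`. -/
def StronglyKurtzRandom (U : List Bool →. List Bool) (x : ℕ → Bool) : Prop :=
  ¬ ∃ r : ℕ → ℕ, Computable r ∧ ∀ n : ℕ, KM U (pre x (r n)) ≤ ((r n - n : ℕ) : ℕ∞)

/-- A strong Kurtz test: a uniformly c.e. sequence of sets of strings, all strings of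
`S n` having the same length, with `∑_{τ ∈ S n} 2^{-|τ|} ≤ 2^{-n}`. -/
def StrongKurtzTest (S : ℕ → Set (List Bool)) : Prop :=
  CE {p : ℕ × List Bool | p.2 ∈ S p.1} ∧
  (∀ n : ℕ, ∀ σ ∈ S n, ∀ τ ∈ S n, σ.length = τ.length) ∧
  (∀ n : ℕ, ∑' τ : S n, ((2:ℝ≥0∞) ^ (τ : List Bool).length)⁻¹ ≤ ((2:ℝ≥0∞) ^ n)⁻¹)

/-- The test `S` covers the binary sequence `x` if every `S n` contains a prefix of `x`. -/
def Covers (S : ℕ → Set (List Bool)) (x : ℕ → Bool) : Prop :=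
  ∀ n : ℕ, ∃ τ ∈ S n, pre x τ.length = τ

/-- Kurtz random binary sequence. -/
def KurtzRandom (x : ℕ → Bool) : Prop :=
  ∀ S : Set (List Bool), CE S →
    (∀ σ ∈ S, ∀ τ ∈ S, σ <+: τ → σ = τ) →
    (∑' σ : S, ((2:ℝ≥0∞) ^ (σ : List Bool).length)⁻¹ = 1) →
    ∃ σ ∈ S, pre x σ.length = σ

/-- Immune set: infinite with no infinite c.e. subset. -/
def Immune (A : Set ℕ) : Prop :=
  A.Infinite ∧ ∀ W : Set ℕ, CE W → W.Infinite → ¬ W ⊆ A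

def BiImmune (A : Set ℕ) : Prop := Immune A ∧ Immune Aᶜ

def Hyperimmune (A : Set ℕ) : Prop :=
  A.Infinite ∧ ¬ ∃ f : ℕ → ℕ, Computable f ∧ ∀ n : ℕ, Nat.nth (· ∈ A) n ≤ f n

def HHImmune (A : Set ℕ) : Prop :=
  A.Infinite ∧ ¬ ∃ D : ℕ → Set ℕ, CE {p : ℕ × ℕ | p.2 ∈ D p.1} ∧
    (∀ m n : ℕ, m ≠ n → Disjoint (D m) (D n)) ∧ (∀ n : ℕ, (D n).Finite) ∧
    (∀ n : ℕ, (A ∩ D n).Nonempty)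

def StronglyHHImmune (A : Set ℕ) : Prop :=
  A.Infinite ∧ ¬ ∃ D : ℕ → Set ℕ, CE {p : ℕ × ℕ | p.2 ∈ D p.1} ∧
    (∀ m n : ℕ, m ≠ n → Disjoint (D m) (D n)) ∧
    (∀ n : ℕ, (A ∩ D n).Nonempty)

def Cohesive (A : Set ℕ) : Prop :=
  A.Infinite ∧ ¬ ∃ W : Set ℕ, CE W ∧ (A ∩ W).Infinite ∧ (A ∩ Wᶜ).Infinite

/-- The join `A ⊕ B`. -/
def join (A B : Set ℕ) : Set ℕ :=
  {m : ℕ | ∃ n : ℕ, (m = 2 * n ∧ n ∈ A) ∨ (m = 2 * n + 1 ∧ n ∈ B)}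

/-- Strongly left-computable real. -/
def StronglyLC (x : ℝ) : Prop := ∃ A : Set ℕ, CE A ∧ xA A = x

/-- Regular real: a sum of finitely many strongly left-computable reals. -/
def RegularReal (x : ℝ) : Prop :=
  ∃ (n : ℕ) (y : Fin n → ℝ), (∀ i, StronglyLC (y i)) ∧ ∑ i, y i = x

/-- Effective packing dimension with respect to `U`. -/
noncomputable def eDimSup (U : List Bool →. List Bool) (x : ℕ → Bool) : ℝ≥0∞ :=
  Filter.limsup (fun n : ℕ => (KM U (pre x n) : ℝ≥0∞) / (n : ℝ≥0∞)) Filter.atTop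

/-- Effective Hausdorff dimension with respect to `U`. -/
noncomputable def eDimInf (U : List Bool →. List Bool) (x : ℕ → Bool) : ℝ≥0∞ :=
  Filter.liminf (fun n : ℕ => (KM U (pre x n) : ℝ≥0∞) / (n : ℝ≥0∞)) Filter.atTop

/- ===================== auxiliary development ===================== -/

section Reg

open Finset

/-- weight of position `i` -/
noncomputable def wt (i : ℕ) : ℝ := ((2:ℝ) ^ (i+1))⁻¹

lemma wt_pos (i : ℕ) : 0 < wt i := by unfold wt; positivity

lemma wt_nonneg (i : ℕ) : 0 ≤ wt i := (wt_pos i).le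

lemma wt_eq_pow (i : ℕ) : wt i = (2:ℝ)⁻¹ ^ (i+1) := by unfold wt; rw [inv_pow]

lemma zpow_eq_wt (i : ℕ) : (2:ℝ) ^ (-((i:ℤ) + 1)) = wt i := by
  have h : (-((i:ℤ)+1)) = -((i+1 : ℕ) : ℤ) := by push_cast; ring
  rw [wt, h, zpow_neg, zpow_natCast]

lemma summable_wt : Summable wt := by
  have h : Summable (fun i : ℕ => (2:ℝ)⁻¹ * (2:ℝ)⁻¹ ^ i) :=
    (summable_geometric_of_lt_one (by norm_num) (by norm_num)).mul_left _
  refine h.congr fun i => ?_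
  rw [wt_eq_pow, pow_succ']

lemma tsum_wt : ∑' i, wt i = 1 := by
  have h : ∑' i : ℕ, ((2:ℝ)⁻¹ * (2:ℝ)⁻¹ ^ i) = 1 := by
    rw [tsum_mul_left, tsum_geometric_of_lt_one (by norm_num) (by norm_num)]
    norm_num
  rw [← h]
  refine tsum_congr fun i => ?_
  rw [wt_eq_pow, pow_succ']

/-- value of a boolean sequence -/
noncomputable def bvb (x : ℕ → Bool) : ℝ := ∑' i, if x i then wt i else 0

lemma bvterm_nonneg (x : ℕ → Bool) (i : ℕ) : 0 ≤ (if x i then wt i else 0) := by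
  split <;> simp [wt_nonneg]

lemma bvterm_le (x : ℕ → Bool) (i : ℕ) : (if x i then wt i else 0) ≤ wt i := by
  split <;> simp [wt_nonneg]

lemma summable_bvb (x : ℕ → Bool) : Summable (fun i => if x i then wt i else 0) :=
  Summable.of_nonneg_of_le (bvterm_nonneg x) (bvterm_le x) summable_wt

lemma binVal_eq_bvb (x : ℕ → Bool) : binVal x = bvb x := by
  refine tsum_congr fun i => ?_
  rw [zpow_eq_wt]

lemma bvb_nonneg (x : ℕ → Bool) : 0 ≤ bvb x :=
  tsum_nonneg (bvterm_nonneg x)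

lemma bvb_le_one (x : ℕ → Bool) : bvb x ≤ 1 := by
  have := Summable.tsum_le_tsum (bvterm_le x) (summable_bvb x) summable_wt
  simpa [bvb, tsum_wt] using this

lemma bvb_all_false (x : ℕ → Bool) (h : bvb x = 0) (i : ℕ) : x i = false := by
  by_contra hb
  have hx : x i = true := by simpa using hb
  have hle : (if x i then wt i else 0) ≤ bvb x :=
    Summable.le_tsum (summable_bvb x) i (fun j _ => bvterm_nonneg x j)
  rw [hx, h] at hle
  simp at hle
  exact absurd hle (not_le.2 (wt_pos i))

lemma bvb_all_true (x : ℕ → Bool) (h : bvb x = 1) (i : ℕ) : x i = true := by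
  have hadd : bvb x + bvb (fun i => !(x i)) = 1 := by
    rw [bvb, bvb, ← Summable.tsum_add (summable_bvb x) (summable_bvb (fun i => !(x i))), ← tsum_wt]
    refine tsum_congr fun i => ?_
    cases hx : x i <;> simp [hx]
  have h0 : bvb (fun i => !(x i)) = 0 := by linarith [hadd, h]
  have := bvb_all_false _ h0 i
  simpa using this

/-- partial sums -/
noncomputable def QB (x : ℕ → Bool) (m : ℕ) : ℝ := ∑ i ∈ range m, (if x i then wt i else 0)

def shft (x : ℕ → Bool) (m : ℕ) : ℕ → Bool := fun i => x (m + i)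

lemma wt_add (i m : ℕ) : wt (i + m) = (2^m : ℝ)⁻¹ * wt i := by
  unfold wt
  rw [← mul_inv, ← pow_add]
  ring_nf

lemma bvb_split (x : ℕ → Bool) (m : ℕ) :
    bvb x = QB x m + (2^m : ℝ)⁻¹ * bvb (shft x m) := by
  have h := Summable.sum_add_tsum_nat_add (f := fun i => if x i then wt i else 0) m (summable_bvb x)
  rw [bvb, ← h, QB]
  congr 1
  rw [bvb, ← tsum_mul_left]
  refine tsum_congr fun i => ?_
  have hsh : shft x m i = x (i + m) := by simp [shft, Nat.add_comm]
  by_cases hx : x (i + m) <;> simp [hsh, hx, wt_add]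

/-- dyadic rational -/
def Dyad (r : ℝ) : Prop := ∃ (z : ℤ) (m : ℕ), r = (z:ℝ) / 2^m

/-- integer numerator of the length-`m` prefix -/
def qib (x : ℕ → Bool) (m : ℕ) : ℕ := ∑ i ∈ range m, (if x i then 2^(m-1-i) else 0)

lemma qib_cast (x : ℕ → Bool) (m : ℕ) : (qib x m : ℝ) = 2^m * QB x m := by
  rw [qib, QB, mul_sum]
  push_cast
  refine sum_congr rfl fun i hi => ?_
  have him : i < m := mem_range.1 hi
  by_cases hx : x i <;> simp only [hx, if_true, if_false, mul_zero]
  · have hexp : (m-1-i) + (i+1) = m := by omega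
    have : (2:ℝ)^m = (2:ℝ)^(m-1-i) * 2^(i+1) := by rw [← pow_add, hexp]
    rw [this, wt, mul_assoc, mul_inv_cancel₀ (by positivity), mul_one]
  · simp

lemma qib_succ (x : ℕ → Bool) (m : ℕ) :
    qib x (m+1) = 2 * qib x m + (if x m then 1 else 0) := by
  rw [qib, sum_range_succ, qib, mul_sum]
  have hlast : (if x m then 2^(m+1-1-m) else 0) = (if x m then 1 else 0) := by
    split <;> simp
  rw [hlast]
  congr 1
  refine sum_congr rfl fun i hi => ?_
  have him : i < m := mem_range.1 hi
  by_cases hx : x i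
  · simp only [hx, if_true]
    have h2 : m+1-1-i = (m-1-i)+1 := by omega
    rw [h2, pow_succ]
    ring
  · simp [hx]

end Reg

section Reg2

open Finset

noncomputable def cvP (c : ℕ → ℕ) (j : ℕ) : ℝ := ∑ k ∈ range j, (c k : ℝ) * wt k

noncomputable def cv (c : ℕ → ℕ) : ℝ := ∑' j, (c j : ℝ) * wt j

def ppn (c : ℕ → ℕ) (j : ℕ) : ℕ := ∑ k ∈ range j, c k * 2^(j-1-k)

noncomputable def th (c : ℕ → ℕ) (x : ℕ → Bool) (j : ℕ) : ℝ := 2^(j+1) * (bvb x - cvP c j)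

def Gd (c : ℕ → ℕ) (x : ℕ → Bool) (j : ℕ) : ℕ := qib x (j+1) - 2 * ppn c j

def GSn (cs : ℕ → ℕ → ℕ) (s j : ℕ) : ℕ :=
  (∑ k ∈ Finset.Ico j s, cs s k * 2^(s-1-k)) / 2^(s-1-j)

noncomputable def thS (cs : ℕ → ℕ → ℕ) (s j : ℕ) : ℝ :=
  2^(j+1) * ∑ k ∈ Finset.Ico j s, (cs s k : ℝ) * wt k

variable {c : ℕ → ℕ} {n : ℕ} {x : ℕ → Bool} {cs : ℕ → ℕ → ℕ}

lemma cterm_nonneg (c : ℕ → ℕ) (k : ℕ) : 0 ≤ (c k : ℝ) * wt k :=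
  mul_nonneg (Nat.cast_nonneg _) (wt_nonneg _)

lemma summable_cv (hc : ∀ j, c j ≤ n) : Summable (fun j => (c j:ℝ) * wt j) := by
  refine Summable.of_nonneg_of_le (fun j => cterm_nonneg c j) (fun j => ?_) (summable_wt.mul_left (n:ℝ))
  exact mul_le_mul_of_nonneg_right (by exact_mod_cast hc j) (wt_nonneg j)

lemma cvP_le_cv (hc : ∀ j, c j ≤ n) (j : ℕ) : cvP c j ≤ cv c :=
  Summable.sum_le_tsum (range j) (fun k _ => cterm_nonneg c k) (summable_cv hc)

lemma cv_sub_cvP_le (hc : ∀ j, c j ≤ n) (j : ℕ) : cv c - cvP c j ≤ n * (2^j : ℝ)⁻¹ := by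
  have hsplit := Summable.sum_add_tsum_nat_add (f := fun k => (c k:ℝ) * wt k) j (summable_cv hc)
  have htail : cv c - cvP c j = ∑' k, (c (k+j) : ℝ) * wt (k+j) := by
    rw [cv, ← hsplit, cvP]; ring
  rw [htail]
  have h1 : ∑' k, (n:ℝ) * ((2^j:ℝ)⁻¹ * wt k) = n * (2^j:ℝ)⁻¹ := by
    rw [tsum_mul_left, tsum_mul_left, tsum_wt]; ring
  rw [← h1]
  refine Summable.tsum_le_tsum (fun k => ?_) ?_ ?_
  · rw [wt_add]
    have hb : (c (k+j) : ℝ) ≤ n := by exact_mod_cast hc (k+j)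
    have hnn : (0:ℝ) ≤ (2^j:ℝ)⁻¹ * wt k := mul_nonneg (by positivity) (wt_nonneg k)
    exact mul_le_mul_of_nonneg_right hb hnn
  · exact ((summable_cv hc).comp_injective (add_left_injective j))
  · exact ((summable_wt.mul_left _).mul_left _)

lemma ppn_cast (c : ℕ → ℕ) (j : ℕ) : (ppn c j : ℝ) = 2^j * cvP c j := by
  rw [ppn, cvP, mul_sum]
  push_cast
  refine sum_congr rfl fun k hk => ?_
  have hkj : k < j := mem_range.1 hk
  have hexp : (j-1-k) + (k+1) = j := by omega
  have h2 : (2:ℝ)^j = (2:ℝ)^(j-1-k) * 2^(k+1) := by rw [← pow_add, hexp]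
  rw [h2, wt]
  field_simp

/-- main structural identity in the non-dyadic case -/
lemma th_structure (hc : ∀ j, c j ≤ n) (hr : bvb x = cv c) (hnd : ¬ Dyad (bvb x)) (j : ℕ) :
    2 * ppn c j ≤ qib x (j+1) ∧
    th c x j = (Gd c x j : ℝ) + bvb (shft x (j+1)) ∧
    0 < bvb (shft x (j+1)) ∧ bvb (shft x (j+1)) < 1 := by
  set t' := bvb (shft x (j+1)) with ht'
  have hsplit := bvb_split x (j+1)
  have hq : (qib x (j+1) : ℝ) = 2^(j+1) * QB x (j+1) := qib_cast x (j+1)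
  have hpow : (0:ℝ) < 2^(j+1) := by positivity
  have ht0 : t' ≠ 0 := by
    intro h0
    have h0' : bvb (shft x (j+1)) = 0 := h0
    apply hnd
    refine ⟨(qib x (j+1) : ℤ), j+1, ?_⟩
    rw [hsplit, h0']
    push_cast [hq]
    field_simp
    ring
  have ht1 : t' ≠ 1 := by
    intro h1
    have h1' : bvb (shft x (j+1)) = 1 := h1
    apply hnd
    refine ⟨(qib x (j+1) : ℤ) + 1, j+1, ?_⟩
    rw [hsplit, h1']
    push_cast [hq]
    field_simp
  have htpos : 0 < t' := lt_of_le_of_ne (bvb_nonneg _) (Ne.symm ht0)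
  have htlt : t' < 1 := lt_of_le_of_ne (bvb_le_one _) ht1
  -- key scalar equation
  have hkey : 2^(j+1) * bvb x = (qib x (j+1) : ℝ) + t' := by
    rw [hsplit, hq]
    field_simp
    ring
  have hppn : 2^(j+1) * cvP c j = 2 * (ppn c j : ℝ) := by
    rw [ppn_cast]; ring
  have hth : th c x j = ((qib x (j+1) : ℝ) - 2 * (ppn c j : ℝ)) + t' := by
    rw [th, mul_sub, hkey, hppn]; ring
  have hth_nonneg : 0 ≤ th c x j := by
    rw [th, hr]
    have := cvP_le_cv hc j
    have h2 : 0 ≤ cv c - cvP c j := by linarith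
    exact mul_nonneg (by positivity) h2
  have hKpos : (-1 : ℝ) < (qib x (j+1) : ℝ) - 2 * (ppn c j : ℝ) := by
    by_contra hcon
    push_neg at hcon
    have : th c x j < 0 := by rw [hth]; linarith
    linarith
  have h2le : 2 * ppn c j ≤ qib x (j+1) := by
    by_contra hcon
    push_neg at hcon
    have : (qib x (j+1) : ℝ) + 1 ≤ 2 * (ppn c j : ℝ) := by exact_mod_cast hcon
    linarith
  have hGd : (Gd c x j : ℝ) = (qib x (j+1) : ℝ) - 2 * (ppn c j : ℝ) := by
    rw [Gd]
    push_cast [Nat.cast_sub h2le]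
    ring
  exact ⟨h2le, by rw [hth, hGd], htpos, htlt⟩

lemma th_le_2n (hc : ∀ j, c j ≤ n) (hr : bvb x = cv c) (j : ℕ) :
    th c x j ≤ 2 * n := by
  rw [th, hr]
  have h := cv_sub_cvP_le hc j
  have hpow : (0:ℝ) < 2^(j+1) := by positivity
  have h2 : (2:ℝ)^(j+1) * (n * (2^j:ℝ)⁻¹) = 2 * n := by
    rw [pow_succ]
    field_simp
  calc 2^(j+1) * (cv c - cvP c j) ≤ 2^(j+1) * (n * (2^j:ℝ)⁻¹) := by
        apply mul_le_mul_of_nonneg_left h (le_of_lt hpow)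
    _ = 2 * n := h2

lemma Gd_lt_2n (hc : ∀ j, c j ≤ n) (hr : bvb x = cv c) (hnd : ¬ Dyad (bvb x)) (j : ℕ) :
    Gd c x j < 2 * n := by
  obtain ⟨_, heq, htpos, _⟩ := th_structure hc hr hnd j
  have h1 : (Gd c x j : ℝ) < th c x j := by rw [heq]; linarith
  have h2 := th_le_2n hc hr j
  have : (Gd c x j : ℝ) < (2*n : ℕ) := by push_cast; linarith
  exact_mod_cast this

lemma x_eq_parity (hc : ∀ j, c j ≤ n) (hr : bvb x = cv c) (hnd : ¬ Dyad (bvb x)) (j : ℕ) :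
    x j = decide (Gd c x j % 2 = 1) := by
  obtain ⟨h2le, _, _, _⟩ := th_structure hc hr hnd j
  have hsum : Gd c x j + 2 * ppn c j = qib x (j+1) := by
    rw [Gd]; omega
  have hsucc := qib_succ x j
  cases hx : x j
  · rw [hx, if_neg (by simp)] at hsucc
    have : Gd c x j % 2 = 0 := by omega
    simp [this]
  · rw [hx, if_pos rfl] at hsucc
    have : Gd c x j % 2 = 1 := by omega
    simp [this]

lemma thS_nonneg (cs : ℕ → ℕ → ℕ) (s j : ℕ) : 0 ≤ thS cs s j := by
  rw [thS]
  have h : (0:ℝ) ≤ ∑ k ∈ Finset.Ico j s, (cs s k : ℝ) * wt k :=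
    Finset.sum_nonneg fun k _ => cterm_nonneg _ k
  exact mul_nonneg (by positivity) h

lemma GSn_eq_floor (cs : ℕ → ℕ → ℕ) (s j : ℕ) : GSn cs s j = ⌊thS cs s j⌋₊ := by
  rcases lt_or_ge j s with hjs | hjs
  · have key : thS cs s j
        = ((∑ k ∈ Finset.Ico j s, cs s k * 2^(s-1-k) : ℕ) : ℝ) / ((2^(s-1-j) : ℕ) : ℝ) := by
      rw [thS, eq_div_iff (by positivity), mul_sum, sum_mul]
      push_cast
      refine sum_congr rfl fun k hk => ?_
      obtain ⟨hk1, hk2⟩ := Finset.mem_Ico.1 hk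
      have e1 : (j+1) + (s-1-j) = s := by omega
      have e2 : (s-1-k) + (k+1) = s := by omega
      have h1 : (2:ℝ)^(j+1) * (2:ℝ)^(s-1-j) = 2^s := by rw [← pow_add, e1]
      have h2 : (2:ℝ)^(s-1-k) * (2:ℝ)^(k+1) = 2^s := by rw [← pow_add, e2]
      have h3 : ((2:ℝ)^(k+1))⁻¹ * (2:ℝ)^(k+1) = 1 := inv_mul_cancel₀ (by positivity)
      rw [wt]
      calc (2:ℝ)^(j+1) * ((cs s k : ℝ) * ((2:ℝ)^(k+1))⁻¹) * 2^(s-1-j)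
          = (cs s k : ℝ) * ((2:ℝ)^(j+1) * (2:ℝ)^(s-1-j)) * ((2:ℝ)^(k+1))⁻¹ := by ring
        _ = (cs s k : ℝ) * ((2:ℝ)^(s-1-k) * (2:ℝ)^(k+1)) * ((2:ℝ)^(k+1))⁻¹ := by rw [h1, ← h2]
        _ = (cs s k : ℝ) * (2:ℝ)^(s-1-k) * (((2:ℝ)^(k+1))⁻¹ * (2:ℝ)^(k+1)) := by ring
        _ = (cs s k : ℝ) * (2:ℝ)^(s-1-k) := by rw [h3, mul_one]
    rw [key, Nat.floor_div_natCast, Nat.floor_natCast]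
    rfl
  · have hempty : Finset.Ico j s = ∅ := Finset.Ico_eq_empty (by omega)
    rw [GSn, thS, hempty]
    simp

lemma thS_le_th (hc : ∀ k, c k ≤ n) (hle : ∀ s k, cs s k ≤ c k) (hr : bvb x = cv c)
    (s j : ℕ) : thS cs s j ≤ th c x j := by
  rw [thS, th, hr]
  have hpow : (0:ℝ) ≤ 2^(j+1) := by positivity
  refine mul_le_mul_of_nonneg_left ?_ hpow
  have hmain : cvP c j + ∑ k ∈ Finset.Ico j s, (cs s k : ℝ) * wt k ≤ cv c := by
    rcases le_or_gt j s with hjs | hjs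
    · set g : ℕ → ℝ := fun k => if k < j then (c k:ℝ) * wt k else (cs s k : ℝ) * wt k with hg
      have hsplit := Finset.sum_Ico_consecutive g (Nat.zero_le j) hjs
      have h1 : cvP c j = ∑ k ∈ Finset.Ico 0 j, g k := by
        rw [cvP, Finset.range_eq_Ico]
        refine sum_congr rfl fun k hk => ?_
        have : k < j := (Finset.mem_Ico.1 hk).2
        simp [hg, this]
      have h2 : (∑ k ∈ Finset.Ico j s, (cs s k : ℝ) * wt k) = ∑ k ∈ Finset.Ico j s, g k := by
        refine sum_congr rfl fun k hk => ?_
        have : ¬ (k < j) := by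
          have := (Finset.mem_Ico.1 hk).1; omega
        simp [hg, this]
      rw [h1, h2, hsplit]
      have h3 : (∑ k ∈ Finset.Ico 0 s, g k) ≤ ∑ k ∈ range s, (c k : ℝ) * wt k := by
        rw [Finset.range_eq_Ico]
        refine Finset.sum_le_sum fun k _ => ?_
        by_cases hk : k < j
        · simp [hg, hk]
        · simp only [hg, hk, if_false]
          exact mul_le_mul_of_nonneg_right (by exact_mod_cast hle s k) (wt_nonneg k)
      exact h3.trans (Summable.sum_le_tsum (range s) (fun k _ => cterm_nonneg c k) (summable_cv hc))
    · have hempty : Finset.Ico j s = ∅ := Finset.Ico_eq_empty (by omega)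
      rw [hempty]
      simpa using cvP_le_cv hc j
  linarith

lemma GSn_le_Gd (hc : ∀ k, c k ≤ n) (hle : ∀ s k, cs s k ≤ c k) (hr : bvb x = cv c)
    (hnd : ¬ Dyad (bvb x)) (s j : ℕ) : GSn cs s j ≤ Gd c x j := by
  obtain ⟨_, heq, _, htlt⟩ := th_structure hc hr hnd j
  have hfl : (GSn cs s j : ℝ) ≤ thS cs s j := by
    rw [GSn_eq_floor]
    exact Nat.floor_le (thS_nonneg cs s j)
  have hlt : (GSn cs s j : ℝ) < (Gd c x j : ℝ) + 1 := by
    have := thS_le_th hc hle hr s j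
    rw [heq] at this
    linarith
  have : GSn cs s j < Gd c x j + 1 := by exact_mod_cast hlt
  omega

lemma exists_GSn_eq (hc : ∀ k, c k ≤ n) (hle : ∀ s k, cs s k ≤ c k)
    (hconv : ∀ k, ∃ s0, ∀ s, s0 ≤ s → cs s k = c k)
    (hr : bvb x = cv c) (hnd : ¬ Dyad (bvb x)) (j : ℕ) :
    ∃ s, GSn cs s j = Gd c x j := by
  obtain ⟨h2le, heq, htpos, htlt⟩ := th_structure hc hr hnd j
  set t' := bvb (shft x (j+1)) with ht'
  set ε := t' / 2^(j+1) with hε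
  have hεpos : 0 < ε := by rw [hε]; positivity
  have htend := (summable_cv hc).hasSum.tendsto_sum_nat
  obtain ⟨N, hN⟩ := Metric.tendsto_atTop.1 htend ε hεpos
  set m := max N j with hm
  have hmN : N ≤ m := le_max_left _ _
  have hjm : j ≤ m := le_max_right _ _
  have hdist := hN m hmN
  rw [Real.dist_eq, abs_lt] at hdist
  have hcv : cv c = ∑' (b : ℕ), (c b:ℝ) * wt b := rfl
  have hmgt : cv c - ε < ∑ k ∈ range m, (c k:ℝ) * wt k := by linarith [hdist.1]
  choose s0 hs0 using hconv
  set S := max m ((range m).sup s0) with hS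
  have hmS : m ≤ S := le_max_left _ _
  have hstab : ∀ k, k < m → cs S k = c k := by
    intro k hk
    exact hs0 k S (le_trans (Finset.le_sup (Finset.mem_range.2 hk)) (le_max_right _ _))
  have hchain : (Gd c x j : ℝ) ≤ thS cs S j := by
    have h1 : (∑ k ∈ Finset.Ico j m, (c k : ℝ) * wt k) ≤ ∑ k ∈ Finset.Ico j S, (cs S k : ℝ) * wt k := by
      have hsub : Finset.Ico j m ⊆ Finset.Ico j S := Finset.Ico_subset_Ico le_rfl hmS
      have h2 : (∑ k ∈ Finset.Ico j m, (c k : ℝ) * wt k) = ∑ k ∈ Finset.Ico j m, (cs S k : ℝ) * wt k := by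
        refine sum_congr rfl fun k hk => ?_
        rw [hstab k (Finset.mem_Ico.1 hk).2]
      rw [h2]
      exact Finset.sum_le_sum_of_subset_of_nonneg hsub (fun k _ _ => cterm_nonneg _ k)
    have h3 : (∑ k ∈ Finset.Ico j m, (c k : ℝ) * wt k)
        = (∑ k ∈ range m, (c k : ℝ) * wt k) - ∑ k ∈ range j, (c k : ℝ) * wt k := by
      rw [Finset.sum_Ico_eq_sub _ hjm]
    have h4 : cv c - ε - cvP c j < ∑ k ∈ Finset.Ico j m, (c k : ℝ) * wt k := by
      rw [h3, cvP]
      linarith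
    have hpow' : (0:ℝ) < 2^(j+1) := by positivity
    have hεt : (2:ℝ)^(j+1) * ε = t' := by
      rw [hε]
      field_simp
    have h5 : th c x j - t' = 2^(j+1) * ((cv c - ε) - cvP c j) := by
      rw [th, hr, ← hεt]
      ring
    have h6 : (Gd c x j : ℝ) = th c x j - t' := by rw [heq]; ring
    rw [h6, thS]
    have hpow : (0:ℝ) ≤ 2^(j+1) := by positivity
    calc th c x j - t' ≤ 2^(j+1) * ((cv c - ε) - cvP c j) := le_of_eq h5
      _ ≤ 2^(j+1) * ∑ k ∈ Finset.Ico j m, (c k : ℝ) * wt k := by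
          apply mul_le_mul_of_nonneg_left (le_of_lt h4) hpow
      _ ≤ 2^(j+1) * ∑ k ∈ Finset.Ico j S, (cs S k : ℝ) * wt k := by
          apply mul_le_mul_of_nonneg_left h1 hpow
  refine ⟨S, le_antisymm (GSn_le_Gd hc hle hr hnd S j) ?_⟩
  rw [GSn_eq_floor]
  exact Nat.le_floor hchain

end Reg2

section Reg3

open Finset Nat.Partrec Nat.Partrec.Code
open scoped Classical

lemma infinite_exists_gt {s : Set ℕ} (hs : s.Infinite) (a : ℕ) : ∃ b ∈ s, a < b := by
  by_contra hcon
  push_neg at hcon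
  exact hs (Set.Finite.subset (Set.finite_Iic a) (fun b hb => Set.mem_Iic.2 (hcon b hb)))

/-- dyadic values have eventually constant expansions -/
lemma eventually_const_of_dyad (x : ℕ → Bool) (hd : Dyad (bvb x)) :
    ∃ (N : ℕ) (bc : Bool), ∀ j, N ≤ j → x j = bc := by
  obtain ⟨z, m, hz⟩ := hd
  have hsplit := bvb_split x m
  have hq : (qib x m : ℝ) = 2^m * QB x m := qib_cast x m
  have hpow : (0:ℝ) < 2^m := by positivity
  have hteq : bvb (shft x m) = (z:ℝ) - (qib x m : ℝ) := by
    have h2 : 2^m * bvb x = (z:ℝ) := by rw [hz]; field_simp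
    have h3 : 2^m * bvb x = (qib x m : ℝ) + bvb (shft x m) := by
      rw [hsplit, mul_add, ← hq]
      field_simp
    linarith
  have h0 : (0:ℝ) ≤ (z:ℝ) - (qib x m : ℝ) := by rw [← hteq]; exact bvb_nonneg _
  have h1 : (z:ℝ) - (qib x m : ℝ) ≤ 1 := by rw [← hteq]; exact bvb_le_one _
  have ha : (0:ℤ) ≤ z - (qib x m : ℤ) := by exact_mod_cast h0
  have hb : z - (qib x m : ℤ) ≤ 1 := by exact_mod_cast h1
  have hcast : ((z - (qib x m : ℤ) : ℤ) : ℝ) = bvb (shft x m) := by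
    rw [hteq]; push_cast; ring
  rcases (by omega : z - (qib x m : ℤ) = 0 ∨ z - (qib x m : ℤ) = 1) with hK | hK
  · refine ⟨m, false, fun j hj => ?_⟩
    have hzero : bvb (shft x m) = 0 := by rw [← hcast, hK]; simp
    have := bvb_all_false _ hzero (j - m)
    rw [shft] at this
    rwa [Nat.add_sub_cancel' hj] at this
  · refine ⟨m, true, fun j hj => ?_⟩
    have hone : bvb (shft x m) = 1 := by rw [← hcast, hK]; simp
    have := bvb_all_true _ hone (j - m)
    rw [shft] at this
    rwa [Nat.add_sub_cancel' hj] at this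

lemma hpow2_primrec : Primrec (fun m : ℕ => 2^m) := by
  have h : Primrec₂ (fun (_ : ℕ) (m : ℕ) =>
      m.rec (motive := fun _ => ℕ) 1 (fun _ IH => 2 * IH)) :=
    Primrec.nat_rec (Primrec.const 1)
      (Primrec.nat_mul.comp (Primrec.const 2) (Primrec.snd.comp Primrec.snd)).to₂
  have h2 : Primrec (fun m : ℕ => (fun (_ : ℕ) (m : ℕ) =>
      m.rec (motive := fun _ => ℕ) 1 (fun _ IH => 2 * IH)) 0 m) := h.comp (.const 0) .id
  refine h2.of_eq fun m => ?_
  induction m with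
  | zero => rfl
  | succ k ih => simpa [pow_succ, ih] using by ring

lemma csList_primrec (L : List Nat.Partrec.Code) :
    Primrec (fun p : ℕ × ℕ =>
      (L.map (fun cd => if (Nat.Partrec.Code.evaln p.1 cd p.2).isSome then (1:ℕ) else 0)).sum) := by
  induction L with
  | nil => simpa using Primrec.const 0
  | cons cd L ih =>
      have hev : Primrec (fun p : ℕ × ℕ => Nat.Partrec.Code.evaln p.1 cd p.2) :=
        Nat.Partrec.Code.primrec_evaln.comp
          (Primrec.pair (Primrec.pair Primrec.fst (Primrec.const cd)) Primrec.snd)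
      have hsome : Primrec (fun p : ℕ × ℕ => (Nat.Partrec.Code.evaln p.1 cd p.2).isSome) :=
        Primrec.option_isSome.comp hev
      have hterm : Primrec (fun p : ℕ × ℕ =>
          if (Nat.Partrec.Code.evaln p.1 cd p.2).isSome then (1:ℕ) else 0) := by
        refine (Primrec.cond hsome (Primrec.const 1) (Primrec.const 0)).of_eq fun p => ?_
        cases h : (Nat.Partrec.Code.evaln p.1 cd p.2).isSome <;> simp [h]
      refine (Primrec.nat_add.comp hterm ih).of_eq fun p => ?_
      simp

lemma sum_range_eq_list_sum (g : ℕ → ℕ) (s : ℕ) :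
    ∑ k ∈ Finset.range s, g k = ((List.range s).map g).sum := by
  induction s with
  | zero => simp
  | succ t iht => rw [Finset.sum_range_succ, List.range_succ]; simp [iht]

/-- primitive recursiveness of the stage counting function -/
lemma GSn_primrec (cs : ℕ → ℕ → ℕ) (hcs : Primrec (fun p : ℕ × ℕ => cs p.1 p.2)) :
    Primrec (fun p : ℕ × ℕ => GSn cs p.1 p.2) := by
  -- p = (s, j)
  have hlist : ∀ s j, (∑ k ∈ Finset.Ico j s, cs s k * 2^(s-1-k))
      = ((List.range s).map (fun k => if j ≤ k then cs s k * 2^(s-1-k) else 0)).sum := by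
    intro s j
    have h1 : Finset.Ico j s = (Finset.range s).filter (fun k => j ≤ k) := by
      ext k
      simp [Finset.mem_Ico, Finset.mem_filter, Finset.mem_range, and_comm]
    rw [h1, Finset.sum_filter, sum_range_eq_list_sum]
  have hg : Primrec (fun q : (ℕ × ℕ) × ℕ =>
      if q.1.2 ≤ q.2 then cs q.1.1 q.2 * 2^(q.1.1 - 1 - q.2) else 0) := by
    have hc1 : Primrec (fun q : (ℕ × ℕ) × ℕ => cs q.1.1 q.2) :=
      hcs.comp (Primrec.pair (Primrec.fst.comp Primrec.fst) Primrec.snd)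
    have hpw : Primrec (fun q : (ℕ × ℕ) × ℕ => 2^(q.1.1 - 1 - q.2)) :=
      hpow2_primrec.comp (Primrec.nat_sub.comp
        (Primrec.nat_sub.comp (Primrec.fst.comp Primrec.fst) (Primrec.const 1)) Primrec.snd)
    have hmul : Primrec (fun q : (ℕ × ℕ) × ℕ => cs q.1.1 q.2 * 2^(q.1.1 - 1 - q.2)) :=
      Primrec.nat_mul.comp hc1 hpw
    have hle : PrimrecPred (fun q : (ℕ × ℕ) × ℕ => q.1.2 ≤ q.2) :=
      Primrec.nat_le.comp (Primrec.snd.comp Primrec.fst) Primrec.snd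
    exact Primrec.ite hle hmul (Primrec.const 0)
  have hmap : Primrec (fun p : ℕ × ℕ =>
      (List.range p.1).map (fun k => if p.2 ≤ k then cs p.1 k * 2^(p.1-1-k) else 0)) :=
    Primrec.list_map (Primrec.list_range.comp Primrec.fst) hg.to₂
  have hsum : Primrec (fun p : ℕ × ℕ =>
      ((List.range p.1).map (fun k => if p.2 ≤ k then cs p.1 k * 2^(p.1-1-k) else 0)).sum) := by
    have hfold : Primrec (fun p : ℕ × ℕ =>
        ((List.range p.1).map (fun k => if p.2 ≤ k then cs p.1 k * 2^(p.1-1-k) else 0)).foldr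
          (fun b s => b + s) 0) :=
      Primrec.list_foldr hmap (Primrec.const 0)
        (Primrec.nat_add.comp (Primrec.fst.comp Primrec.snd) (Primrec.snd.comp Primrec.snd)).to₂
    refine hfold.of_eq fun p => ?_
    rw [List.sum_eq_foldr]
  have hden : Primrec (fun p : ℕ × ℕ => 2^(p.1 - 1 - p.2)) :=
    hpow2_primrec.comp (Primrec.nat_sub.comp
      (Primrec.nat_sub.comp Primrec.fst (Primrec.const 1)) Primrec.snd)
  refine (Primrec.nat_div.comp hsum hden).of_eq fun p => ?_
  rw [GSn, hlist]

end Reg3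

section Reg3b

open Finset Nat.Partrec Nat.Partrec.Code
open scoped Classical

lemma xA_eq_ite (A : Set ℕ) : xA A = ∑' j, (if j ∈ A then wt j else 0) := by
  refine tsum_congr fun j => ?_
  rw [Set.indicator_apply, zpow_eq_wt]

lemma summable_ite_wt (A : Set ℕ) : Summable (fun j => if j ∈ A then wt j else 0) := by
  refine Summable.of_nonneg_of_le (fun j => ?_) (fun j => ?_) summable_wt <;>
    split <;> simp [wt_nonneg]

/-- from a regular representation to a bounded counting function with
computable stage approximations -/
lemma regular_to_cv (x : ℕ → Bool) (h : RegularReal (binVal x)) :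
    ∃ (n : ℕ) (c : ℕ → ℕ) (cs : ℕ → ℕ → ℕ),
      (∀ k, c k ≤ n) ∧ (∀ s k, cs s k ≤ c k) ∧
      (∀ k, ∃ s0, ∀ s, s0 ≤ s → cs s k = c k) ∧
      bvb x = cv c ∧ Primrec (fun p : ℕ × ℕ => cs p.1 p.2) := by
  obtain ⟨n, y, hy, hsum⟩ := h
  choose A hACE hAx using hy
  -- partial recursive functions with domains `A i`
  set F : Fin n → ℕ →. ℕ :=
    fun i a => (Part.assert (a ∈ A i) fun _ => Part.some ()).map (fun _ => (0:ℕ)) with hF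
  have hFp : ∀ i, Partrec (F i) := by
    intro i
    have hg : Computable₂ (fun (_ : ℕ) (_ : Unit) => (0:ℕ)) :=
      Primrec₂.to_comp (Primrec₂.const 0)
    exact (hACE i).map hg
  have hcode : ∀ i, ∃ cd : Nat.Partrec.Code, eval cd = F i := fun i =>
    exists_code.1 (Partrec.nat_iff.1 (hFp i))
  choose e he using hcode
  have hmem : ∀ (i : Fin n) (a : ℕ), a ∈ A i ↔ ∃ k, (evaln k (e i) a).isSome := by
    intro i a
    constructor
    · intro ha
      have h0 : (0:ℕ) ∈ F i a := by
        rw [hF]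
        simp only [Part.assert_pos ha]
        simp
      rw [← he i] at h0
      obtain ⟨k, hk⟩ := evaln_complete.1 h0
      exact ⟨k, Option.isSome_iff_exists.2 ⟨0, hk⟩⟩
    · rintro ⟨k, hk⟩
      obtain ⟨v, hv⟩ := Option.isSome_iff_exists.1 hk
      have hme : v ∈ evaln k (e i) a := hv
      have := evaln_sound hme
      rw [he i, hF] at this
      simp only [Part.mem_map_iff, Part.mem_assert_iff] at this
      obtain ⟨u, ⟨hu, _⟩, _⟩ := this
      exact hu
  set c : ℕ → ℕ := fun j => ∑ i : Fin n, (if j ∈ A i then 1 else 0) with hcdef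
  set cs : ℕ → ℕ → ℕ :=
    fun s j => ∑ i : Fin n, (if (evaln s (e i) j).isSome then 1 else 0) with hcsdef
  refine ⟨n, c, cs, ?_, ?_, ?_, ?_, ?_⟩
  · intro k
    rw [hcdef]
    calc (∑ i : Fin n, (if k ∈ A i then 1 else 0))
        ≤ ∑ _i : Fin n, 1 := Finset.sum_le_sum (fun i _ => by split <;> omega)
      _ = n := by simp
  · intro s k
    rw [hcdef, hcsdef]
    refine Finset.sum_le_sum fun i _ => ?_
    by_cases hs : (evaln s (e i) k).isSome
    · rw [if_pos hs, if_pos ((hmem i k).2 ⟨s, hs⟩)]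
    · rw [if_neg hs]
      split <;> omega
  · intro k
    have hstage : ∀ i : Fin n, ∃ s0, ∀ s, s0 ≤ s →
        (if (evaln s (e i) k).isSome then (1:ℕ) else 0) = (if k ∈ A i then 1 else 0) := by
      intro i
      by_cases hm : k ∈ A i
      · obtain ⟨k0, hk0⟩ := (hmem i k).1 hm
        refine ⟨k0, fun s hs => ?_⟩
        obtain ⟨v, hv⟩ := Option.isSome_iff_exists.1 hk0
        have hv' : v ∈ evaln k0 (e i) k := hv
        have : v ∈ evaln s (e i) k := evaln_mono hs hv'
        rw [if_pos (Option.isSome_iff_exists.2 ⟨v, this⟩), if_pos hm]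
      · refine ⟨0, fun s _ => ?_⟩
        have : ¬ (evaln s (e i) k).isSome := fun hs => hm ((hmem i k).2 ⟨s, hs⟩)
        rw [if_neg this, if_neg hm]
    choose s0f hs0f using hstage
    refine ⟨Finset.univ.sup s0f, fun s hs => ?_⟩
    rw [hcdef, hcsdef]
    refine Finset.sum_congr rfl fun i _ => ?_
    exact hs0f i s (le_trans (Finset.le_sup (Finset.mem_univ i)) hs)
  · -- bvb x = cv c
    have hx : (∑ i : Fin n, xA (A i)) = bvb x := by
      rw [← binVal_eq_bvb, ← hsum]
      exact Finset.sum_congr rfl fun i _ => hAx i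
    have hswap : (∑ i : Fin n, xA (A i)) = ∑' j, ∑ i : Fin n, (if j ∈ A i then wt j else 0) := by
      rw [Summable.tsum_finsetSum (fun i _ => summable_ite_wt (A i))]
      exact Finset.sum_congr rfl fun i _ => (xA_eq_ite (A i))
    have hper : ∀ j, (∑ i : Fin n, (if j ∈ A i then wt j else 0)) = (c j : ℝ) * wt j := by
      intro j
      rw [hcdef]
      push_cast
      rw [Finset.sum_mul]
      refine Finset.sum_congr rfl fun i _ => ?_
      split <;> simp
    rw [← hx, hswap, cv]
    exact tsum_congr hper
  · -- Primrec
    have hlist : ∀ s j, cs s j = ((List.ofFn (fun i : Fin n => e i)).map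
        (fun cd => if (evaln s cd j).isSome then (1:ℕ) else 0)).sum := by
      intro s j
      rw [hcsdef, List.map_ofFn, List.sum_ofFn]
      rfl
    refine (csList_primrec (List.ofFn (fun i : Fin n => e i))).of_eq fun p => ?_
    rw [hlist]

end Reg3b

section Reg3c

open scoped Classical

/-- The key extraction: from a regular value, a computable predicate certifying
infinitely many digits, all of one colour. -/
lemma exists_chi (x : ℕ → Bool) (h : RegularReal (binVal x)) :
    ∃ (χ : ℕ → ℕ → Bool) (bc : Bool),
      Primrec (fun p : ℕ × ℕ => χ p.1 p.2) ∧
      (∀ j s, χ j s = true → x j = bc) ∧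
      {j | ∃ s, χ j s = true}.Infinite := by
  by_cases hd : Dyad (bvb x)
  · obtain ⟨N, bc, hN⟩ := eventually_const_of_dyad x hd
    refine ⟨fun j _ => decide (N < j), bc, ?_, ?_, ?_⟩
    · exact PrimrecPred.decide (Primrec.nat_lt.comp (Primrec.const N) Primrec.fst)
    · intro j s hj
      exact hN j (Nat.le_of_lt (of_decide_eq_true hj))
    · exact (Set.Ioi_infinite N).mono (fun j hj => ⟨0, decide_eq_true hj⟩)
  · obtain ⟨n, c, cs, hc, hle, hconv, hr, hcs⟩ := regular_to_cv x h
    have hP0 : {j | 0 ≤ Gd c x j}.Infinite := by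
      have huniv : {j | 0 ≤ Gd c x j} = Set.univ := Set.eq_univ_of_forall (fun j => Nat.zero_le _)
      rw [huniv]
      exact Set.infinite_univ
    set dstar := Nat.findGreatest (fun d => {j | d ≤ Gd c x j}.Infinite) (2*n) with hds
    have hPd : {j | dstar ≤ Gd c x j}.Infinite := by
      have := Nat.findGreatest_spec (P := fun d => {j | d ≤ Gd c x j}.Infinite)
        (Nat.zero_le (2*n)) hP0
      exact this
    have hfin : {j | dstar + 1 ≤ Gd c x j}.Finite := by
      by_cases hbig : dstar + 1 ≤ 2*n
      · have := Nat.findGreatest_is_greatest (Nat.lt_succ_self dstar) hbig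
        exact Set.not_infinite.1 this
      · have hempty : {j | dstar + 1 ≤ Gd c x j} = ∅ := by
          ext j
          simp only [Set.mem_setOf_eq, Set.mem_empty_iff_false, iff_false]
          intro hj
          have := Gd_lt_2n hc hr hd j
          omega
        rw [hempty]
        exact Set.finite_empty
    obtain ⟨M0, hM0⟩ := hfin.bddAbove
    have hub : ∀ j, M0 < j → Gd c x j ≤ dstar := by
      intro j hj
      by_contra hcon
      push_neg at hcon
      have hjle : j ≤ M0 := hM0 (show j ∈ {j | dstar + 1 ≤ Gd c x j} from hcon)
      omega
    have hW : {j | M0 < j ∧ Gd c x j = dstar}.Infinite := by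
      refine Set.Infinite.mono ?_ (hPd.diff (Set.finite_Iic M0))
      rintro j ⟨hj1, hj2⟩
      have hj3 : M0 < j := by simpa using hj2
      exact ⟨hj3, le_antisymm (hub j hj3) hj1⟩
    refine ⟨fun j s => decide (M0 < j ∧ GSn cs s j = dstar), decide (dstar % 2 = 1), ?_, ?_, ?_⟩
    · have hGS := GSn_primrec cs hcs
      have h1 : PrimrecPred (fun p : ℕ × ℕ => M0 < p.1) :=
        Primrec.nat_lt.comp (Primrec.const M0) Primrec.fst
      have h2 : PrimrecPred (fun p : ℕ × ℕ => GSn cs p.2 p.1 = dstar) :=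
        Primrec.eq.comp (hGS.comp (Primrec.pair Primrec.snd Primrec.fst)) (Primrec.const dstar)
      have h3 : Primrec (fun p : ℕ × ℕ => decide (M0 < p.1 ∧ GSn cs p.2 p.1 = dstar)) := (h1.and h2).decide
      refine h3.of_eq fun p => ?_
      exact decide_eq_decide.mpr Iff.rfl
    · intro j s hjs
      obtain ⟨hj1, hj2⟩ := of_decide_eq_true hjs
      have hGle : GSn cs s j ≤ Gd c x j := GSn_le_Gd hc hle hr hd s j
      have hGd : Gd c x j = dstar := le_antisymm (hub j hj1) (by omega)
      rw [x_eq_parity hc hr hd j, hGd]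
    · refine Set.Infinite.mono ?_ hW
      rintro j ⟨hj1, hj2⟩
      obtain ⟨s, hs⟩ := exists_GSn_eq hc hle hconv hr hd j
      exact ⟨s, decide_eq_true ⟨hj1, by rw [hs, hj2]⟩⟩

end Reg3c

section TestSet

/-- the test set determined by positions `f` and colour `bc` -/
def testSf (f : ℕ → ℕ) (bc : Bool) : Set (List Bool) :=
  {τ | ∃ t, τ.length = f t + 1 ∧ (∀ u, u < t → τ[f u]? = some bc) ∧
    τ[f t]? = some (!bc)}

lemma prefix_get? {σ τ : List Bool} (h : σ <+: τ) {i : ℕ} (hi : i < σ.length) :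
    τ[i]? = σ[i]? := by
  obtain ⟨r, rfl⟩ := h
  exact List.getElem?_append_left hi

lemma testSf_prefix_free (f : ℕ → ℕ) (hf : StrictMono f) (bc : Bool) :
    ∀ σ ∈ testSf f bc, ∀ τ ∈ testSf f bc, σ <+: τ → σ = τ := by
  rintro σ ⟨t1, hl1, hb1, he1⟩ τ ⟨t2, hl2, hb2, he2⟩ hpre
  have hlen := hpre.length_le
  rcases lt_trichotomy t1 t2 with ht | ht | ht
  · exfalso
    have h1 : τ[f t1]? = some bc := hb2 t1 ht
    have h2 : τ[f t1]? = some (!bc) := by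
      rw [prefix_get? hpre (by omega : f t1 < σ.length)]
      exact he1
    rw [h1] at h2
    cases bc <;> simp at h2
  · apply hpre.eq_of_length
    rw [hl1, hl2, ht]
  · exfalso
    have := hf ht
    omega

lemma pre_get? (x : ℕ → Bool) (m i : ℕ) (hi : i < m) :
    (pre x m)[i]? = some (x i) := by
  rw [pre, List.getElem?_ofFn]
  simp [hi]

lemma testSf_avoids (x : ℕ → Bool) (f : ℕ → ℕ) (bc : Bool)
    (hxf : ∀ t, x (f t) = bc) :
    ∀ σ ∈ testSf f bc, pre x σ.length ≠ σ := by
  rintro σ ⟨t, hl, _, he⟩ hpre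
  have h1 : (pre x σ.length)[f t]? = some (x (f t)) := pre_get? x _ _ (by omega)
  rw [hpre, he, hxf t] at h1
  simp at h1

/-- all lists of a given length -/
def allL : ℕ → Finset (List Bool)
  | 0 => {[]}
  | L+1 => (allL L).biUnion (fun w => {w ++ [false], w ++ [true]})

lemma mem_allL : ∀ (L : ℕ) (τ : List Bool), τ ∈ allL L ↔ τ.length = L := by
  intro L
  induction L with
  | zero =>
    intro τ
    simp [allL, List.length_eq_zero_iff]
  | succ n ih =>
    intro τ
    constructor
    · intro hτ
      simp only [allL, Finset.mem_biUnion] at hτ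
      obtain ⟨w, hw, hτ⟩ := hτ
      have hlw := (ih w).1 hw
      simp only [Finset.mem_insert, Finset.mem_singleton] at hτ
      rcases hτ with rfl | rfl <;> simp [hlw]
    · intro hτ
      have hne : τ ≠ [] := by
        intro h
        rw [h] at hτ
        simp at hτ
      have hdec := (List.dropLast_append_getLast hne).symm
      simp only [allL, Finset.mem_biUnion]
      refine ⟨τ.dropLast, (ih _).2 (by rw [List.length_dropLast, hτ]; rfl), ?_⟩
      simp only [Finset.mem_insert, Finset.mem_singleton]
      cases hlast : τ.getLast hne
      · left
        conv_lhs => rw [hdec]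
        rw [hlast]
      · right
        conv_lhs => rw [hdec]
        rw [hlast]

lemma card_allL : ∀ L, (allL L).card = 2^L := by
  intro L
  induction L with
  | zero => simp [allL]
  | succ n ih =>
    rw [allL, Finset.card_biUnion]
    · have : ∀ w ∈ allL n, ({w ++ [false], w ++ [true]} : Finset (List Bool)).card = 2 := by
        intro w _
        rw [Finset.card_insert_of_notMem (by simp), Finset.card_singleton]
      rw [Finset.sum_congr rfl this, Finset.sum_const, ih]
      ring
    · intro w1 h1 w2 h2 hne
      rw [Function.onFun, Finset.disjoint_left]
      intro τ hτ1 hτ2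
      simp only [Finset.mem_insert, Finset.mem_singleton] at hτ1 hτ2
      apply hne
      have hlen : w1.length = w2.length := by
        rw [(mem_allL n w1).1 h1, (mem_allL n w2).1 h2]
      rcases hτ1 with rfl | rfl <;> rcases hτ2 with h | h <;>
        exact (List.append_inj h hlen).1.symm ▸ rfl

end TestSet

section Counting

def BTgen (f : ℕ → ℕ) (bc : Bool) : ℕ → Finset (List Bool)
  | 0 => allL (f 0)
  | t+1 => ((BTgen f bc t) ×ˢ (allL (f (t+1) - f t - 1))).image
      (fun pr => pr.1 ++ [bc] ++ pr.2)

def STgen (f : ℕ → ℕ) (bc : Bool) (t : ℕ) : Finset (List Bool) :=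
  (BTgen f bc t).image (fun w => w ++ [!bc])

variable {f : ℕ → ℕ} {bc : Bool}

lemma f_lower (hf : StrictMono f) (hf0 : 1 ≤ f 0) : ∀ t, t + 1 ≤ f t := by
  intro t
  induction t with
  | zero => exact hf0
  | succ u ih =>
    have h2 : f u < f (u+1) := hf (by omega)
    omega

lemma mem_BTgen (hf : StrictMono f) : ∀ (t : ℕ) (τ : List Bool), τ ∈ BTgen f bc t ↔
    (τ.length = f t ∧ ∀ u, u < t → τ[f u]? = some bc) := by
  intro t
  induction t with
  | zero =>
    intro τ
    rw [BTgen, mem_allL]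
    simp
  | succ t ih =>
    intro τ
    constructor
    · intro hτ
      rw [BTgen] at hτ
      simp only [Finset.mem_image, Finset.mem_product] at hτ
      obtain ⟨⟨w, u⟩, ⟨hw, hu⟩, rfl⟩ := hτ
      obtain ⟨hwlen, hwget⟩ := (ih w).1 hw
      have hulen := (mem_allL _ u).1 hu
      have hft : f t < f (t+1) := hf (Nat.lt_succ_self t)
      constructor
      · simp only [List.length_append, List.length_cons, List.length_nil, hwlen, hulen]
        omega
      · intro v hv
        rcases Nat.lt_or_ge v t with hvt | hvt
        · have hfv : f v < f t := hf hvt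
          have h1 : f v < (w ++ [bc]).length := by
            simp [hwlen]; omega
          rw [List.getElem?_append_left h1, List.getElem?_append_left (by omega : f v < w.length)]
          exact hwget v hvt
        · have hvt' : v = t := by omega
          subst hvt'
          have h1 : f v < (w ++ [bc]).length := by simp [hwlen]
          rw [List.getElem?_append_left h1, show f v = w.length from hwlen.symm]
          exact List.getElem?_concat_length
    · rintro ⟨hlen, hget⟩
      have hft : f t < f (t+1) := hf (Nat.lt_succ_self t)
      have hlt : f t < τ.length := by omega
      obtain ⟨hlt', hgetel⟩ := List.getElem?_eq_some_iff.1 (hget t (Nat.lt_succ_self t))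
      rw [BTgen]
      simp only [Finset.mem_image, Finset.mem_product]
      refine ⟨(τ.take (f t), τ.drop (f t + 1)), ⟨?_, ?_⟩, ?_⟩
      · refine (ih _).2 ⟨by rw [List.length_take]; omega, fun v hv => ?_⟩
        have hfv : f v < f t := hf hv
        rw [List.getElem?_take_of_lt hfv]
        exact hget v (by omega)
      · rw [mem_allL, List.length_drop, hlen]
        omega
      · have hd : τ.drop (f t) = τ[f t] :: τ.drop (f t + 1) := by
          rw [List.drop_eq_getElem_cons hlt']
        calc τ.take (f t) ++ [bc] ++ τ.drop (f t + 1)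
            = τ.take (f t) ++ ([τ[f t]] ++ τ.drop (f t + 1)) := by
              rw [hgetel, List.append_assoc]
          _ = τ.take (f t) ++ τ.drop (f t) := by rw [hd, List.singleton_append]
          _ = τ := List.take_append_drop _ _

lemma card_BTgen (hf : StrictMono f) (hf0 : 1 ≤ f 0) :
    ∀ t, (BTgen f bc t).card = 2^(f t - t) := by
  intro t
  induction t with
  | zero => rw [BTgen, card_allL, Nat.sub_zero]
  | succ t ih =>
    have hft : f t < f (t+1) := hf (Nat.lt_succ_self t)
    have hfl := f_lower hf hf0 t
    rw [BTgen, Finset.card_image_of_injOn, Finset.card_product, ih, card_allL, ← pow_add]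
    · congr 1
      omega
    · rintro ⟨w1, u1⟩ h1 ⟨w2, u2⟩ h2 heq
      simp only [Finset.mem_coe, Finset.mem_product] at h1 h2
      have hl1 : w1.length = f t := ((mem_BTgen hf t w1).1 h1.1).1
      have hl2 : w2.length = f t := ((mem_BTgen hf t w2).1 h2.1).1
      have hlen : (w1 ++ [bc]).length = (w2 ++ [bc]).length := by simp [hl1, hl2]
      obtain ⟨heq1, heq2⟩ := List.append_inj heq hlen
      obtain ⟨heq3, _⟩ := List.append_inj heq1 (by rw [hl1, hl2])
      exact Prod.ext heq3 heq2

lemma mem_STgen (hf : StrictMono f) (t : ℕ) (τ : List Bool) : τ ∈ STgen f bc t ↔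
    (τ.length = f t + 1 ∧ (∀ u, u < t → τ[f u]? = some bc) ∧
      τ[f t]? = some (!bc)) := by
  constructor
  · intro hτ
    rw [STgen] at hτ
    simp only [Finset.mem_image] at hτ
    obtain ⟨w, hw, rfl⟩ := hτ
    obtain ⟨hwlen, hwget⟩ := (mem_BTgen hf t w).1 hw
    refine ⟨by simp [hwlen], fun u hu => ?_, ?_⟩
    · have : f u < w.length := by rw [hwlen]; exact hf hu
      rw [List.getElem?_append_left this]
      exact hwget u hu
    · rw [show f t = w.length from hwlen.symm]
      exact List.getElem?_concat_length
  · rintro ⟨hlen, hget, hlast⟩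
    obtain ⟨hlt', hgetel⟩ := List.getElem?_eq_some_iff.1 hlast
    rw [STgen]
    simp only [Finset.mem_image]
    refine ⟨τ.take (f t), ?_, ?_⟩
    · refine (mem_BTgen hf t _).2 ⟨by rw [List.length_take]; omega, fun v hv => ?_⟩
      rw [List.getElem?_take_of_lt (hf hv)]
      exact hget v hv
    · have hd : τ.drop (f t) = τ[f t] :: τ.drop (f t + 1) := by
        rw [List.drop_eq_getElem_cons hlt']
      have hdrop : τ.drop (f t + 1) = [] := by
        have : (τ.drop (f t + 1)).length = τ.length - (f t + 1) := List.length_drop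
        rw [hlen] at this
        exact List.length_eq_zero_iff.1 (by omega)
      calc τ.take (f t) ++ [!bc]
          = τ.take (f t) ++ τ.drop (f t) := by rw [hd, hgetel, hdrop]
        _ = τ := List.take_append_drop _ _

lemma card_STgen (hf : StrictMono f) (hf0 : 1 ≤ f 0) (t : ℕ) :
    (STgen f bc t).card = 2^(f t - t) := by
  rw [STgen, Finset.card_image_of_injective _ (List.append_left_injective [!bc]),
    card_BTgen hf hf0]

lemma testSf_eq_union (hf : StrictMono f) :
    testSf f bc = ⋃ t, ↑(STgen f bc t) := by
  ext τ
  simp only [Set.mem_iUnion, Finset.mem_coe, testSf, Set.mem_setOf_eq]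
  constructor
  · rintro ⟨t, h1, h2, h3⟩
    exact ⟨t, (mem_STgen hf t τ).2 ⟨h1, h2, h3⟩⟩
  · rintro ⟨t, ht⟩
    obtain ⟨h1, h2, h3⟩ := (mem_STgen hf t τ).1 ht
    exact ⟨t, h1, h2, h3⟩

lemma testSf_tsum (hf : StrictMono f) (hf0 : 1 ≤ f 0) :
    ∑' σ : (testSf f bc), ((2:ℝ≥0∞) ^ (σ : List Bool).length)⁻¹ = 1 := by
  classical
  have hmem : ∀ (p : Σ t, {σ : List Bool // σ ∈ STgen f bc t}),
      (p.2.1 : List Bool) ∈ testSf f bc := by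
    rintro ⟨t, σ, hσ⟩
    obtain ⟨h1, h2, h3⟩ := (mem_STgen hf t σ).1 hσ
    exact ⟨t, h1, h2, h3⟩
  let e : (Σ t, {σ : List Bool // σ ∈ STgen f bc t}) → {σ : List Bool // σ ∈ testSf f bc} :=
    fun p => ⟨p.2.1, hmem p⟩
  have hinj : Function.Injective e := by
    rintro ⟨t1, σ1, h1⟩ ⟨t2, σ2, h2⟩ heq
    simp only [e, Subtype.mk.injEq] at heq
    have hl1 := ((mem_STgen hf t1 σ1).1 h1).1
    have hl2 := ((mem_STgen hf t2 σ2).1 h2).1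
    have ht : t1 = t2 := by
      apply hf.injective
      have : σ1.length = σ2.length := by rw [heq]
      omega
    subst ht
    exact congrArg (Sigma.mk t1) (Subtype.ext heq)
  have hsurj : Function.Surjective e := by
    rintro ⟨σ, t, h1, h2, h3⟩
    exact ⟨⟨t, σ, (mem_STgen hf t σ).2 ⟨h1, h2, h3⟩⟩, rfl⟩
  have hEq := Equiv.tsum_eq (Equiv.ofBijective e ⟨hinj, hsurj⟩)
    (fun σ : {σ : List Bool // σ ∈ testSf f bc} => ((2:ℝ≥0∞) ^ (σ : List Bool).length)⁻¹)
  rw [← hEq]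
  have hsig : ∑' (p : Σ t, {σ : List Bool // σ ∈ STgen f bc t}),
      ((2:ℝ≥0∞) ^ ((Equiv.ofBijective e ⟨hinj, hsurj⟩) p : List Bool).length)⁻¹
      = ∑' (t : ℕ), ∑' (σ : {σ : List Bool // σ ∈ STgen f bc t}),
        ((2:ℝ≥0∞) ^ (σ : List Bool).length)⁻¹ := ENNReal.tsum_sigma' _
  rw [hsig]
  have hper : ∀ t, (∑' (σ : {σ : List Bool // σ ∈ STgen f bc t}),
      ((2:ℝ≥0∞) ^ (σ : List Bool).length)⁻¹) = ((2:ℝ≥0∞)^(t+1))⁻¹ := by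
    intro t
    rw [(STgen f bc t).tsum_subtype (fun σ => ((2:ℝ≥0∞) ^ σ.length)⁻¹)]
    have h2 : ∀ σ ∈ STgen f bc t, ((2:ℝ≥0∞)^σ.length)⁻¹ = ((2:ℝ≥0∞)^(f t + 1))⁻¹ := by
      intro σ hσ
      rw [((mem_STgen hf t σ).1 hσ).1]
    rw [Finset.sum_congr rfl h2, Finset.sum_const, card_STgen hf hf0, nsmul_eq_mul]
    have hsplit : (2:ℝ≥0∞)^(f t + 1) = 2^(f t - t) * 2^(t+1) := by
      rw [← pow_add]
      congr 1
      have := f_lower hf hf0 t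
      omega
    have hcast : ((2^(f t - t) : ℕ) : ℝ≥0∞) = (2:ℝ≥0∞)^(f t - t) := by push_cast; rfl
    rw [hcast, hsplit, ENNReal.mul_inv (Or.inl (by positivity)) (Or.inl (ENNReal.pow_ne_top ENNReal.ofNat_ne_top)),
      ← mul_assoc, ENNReal.mul_inv_cancel (by positivity) (ENNReal.pow_ne_top ENNReal.ofNat_ne_top), one_mul]
  rw [tsum_congr hper]
  have h3 : ∀ t : ℕ, ((2:ℝ≥0∞)^(t+1))⁻¹ = (2:ℝ≥0∞)⁻¹^(t+1) := fun t => ENNReal.inv_pow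
  rw [tsum_congr h3, ENNReal.tsum_geometric_add_one, ENNReal.one_sub_inv_two, inv_inv,
    ENNReal.inv_mul_cancel (by norm_num) ENNReal.ofNat_ne_top]

end Counting

section Machine

/-- one-step search predicate -/
def QB2 (χ : ℕ → ℕ → Bool) (l m : ℕ) : Bool :=
  decide (l < (Nat.unpair m).1) && χ (Nat.unpair m).1 (Nat.unpair m).2

lemma QB2_ex {χ : ℕ → ℕ → Bool} (hinf : {j | ∃ s, χ j s = true}.Infinite) (l : ℕ) :
    ∃ m, QB2 χ l m = true := by
  obtain ⟨j, hj, hlj⟩ := infinite_exists_gt hinf l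
  obtain ⟨s, hs⟩ := hj
  refine ⟨Nat.pair j s, ?_⟩
  simp [QB2, Nat.unpair_pair, hlj, hs]

def gstep (χ : ℕ → ℕ → Bool) (hinf : {j | ∃ s, χ j s = true}.Infinite) (l : ℕ) : ℕ :=
  Nat.find (QB2_ex hinf l)

def ms2 (χ : ℕ → ℕ → Bool) (hinf : {j | ∃ s, χ j s = true}.Infinite) (l : ℕ) : ℕ → ℕ
  | 0 => gstep χ hinf l
  | t+1 => gstep χ hinf ((Nat.unpair (ms2 χ hinf l t)).1)

def fd (χ : ℕ → ℕ → Bool) (hinf : {j | ∃ s, χ j s = true}.Infinite) (t : ℕ) : ℕ :=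
  (Nat.unpair (ms2 χ hinf 0 t)).1

variable {χ : ℕ → ℕ → Bool} (hinf : {j | ∃ s, χ j s = true}.Infinite)

lemma gstep_spec (l : ℕ) : QB2 χ l (gstep χ hinf l) = true := Nat.find_spec (QB2_ex hinf l)

lemma gstep_min {l m : ℕ} (hm : m < gstep χ hinf l) : QB2 χ l m = false :=
  Bool.eq_false_iff.mpr (Nat.find_min (QB2_ex hinf l) hm)

lemma gstep_gt (l : ℕ) : l < (Nat.unpair (gstep χ hinf l)).1 := by
  have h := gstep_spec hinf l
  rw [QB2, Bool.and_eq_true, decide_eq_true_iff] at h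
  exact h.1

lemma gstep_chi (l : ℕ) :
    χ (Nat.unpair (gstep χ hinf l)).1 (Nat.unpair (gstep χ hinf l)).2 = true := by
  have h := gstep_spec hinf l
  rw [QB2, Bool.and_eq_true] at h
  exact h.2

lemma ms2_shift : ∀ (t l : ℕ),
    ms2 χ hinf l (t+1) = ms2 χ hinf ((Nat.unpair (gstep χ hinf l)).1) t := by
  intro t
  induction t with
  | zero => intro l; rfl
  | succ t ih =>
    intro l
    show gstep χ hinf ((Nat.unpair (ms2 χ hinf l (t+1))).1) = _
    rw [ih l]
    rfl

lemma ms2_chi : ∀ t, χ (Nat.unpair (ms2 χ hinf 0 t)).1 (Nat.unpair (ms2 χ hinf 0 t)).2 = true := by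
  intro t
  cases t with
  | zero => exact gstep_chi hinf 0
  | succ t => exact gstep_chi hinf _

lemma fd_mono : StrictMono (fd χ hinf) := by
  apply strictMono_nat_of_lt_succ
  intro t
  show (Nat.unpair (ms2 χ hinf 0 t)).1 < (Nat.unpair (ms2 χ hinf 0 (t+1))).1
  have : ms2 χ hinf 0 (t+1) = gstep χ hinf ((Nat.unpair (ms2 χ hinf 0 t)).1) := rfl
  rw [this]
  exact gstep_gt hinf _

lemma fd0_pos : 1 ≤ fd χ hinf 0 := gstep_gt hinf 0

lemma fd_sound {x : ℕ → Bool} {bc : Bool} (hsound : ∀ j s, χ j s = true → x j = bc) :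
    ∀ t, x (fd χ hinf t) = bc := fun t => hsound _ _ (ms2_chi hinf t)

/-- canonical transcripts -/
def CTr (χ : ℕ → ℕ → Bool) (hinf : {j | ∃ s, χ j s = true}.Infinite) (l : ℕ) : ℕ → List ℕ
  | 0 => []
  | k+1 => gstep χ hinf l :: CTr χ hinf ((Nat.unpair (gstep χ hinf l)).1) k

lemma CTr_len : ∀ (k l : ℕ), (CTr χ hinf l k).length = k := by
  intro k
  induction k with
  | zero => intro l; rfl
  | succ k ih => intro l; show (CTr χ hinf l (k+1)).length = k+1; rw [CTr]; simp [ih]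

lemma CTr_append : ∀ (k l : ℕ), CTr χ hinf l (k+1) = CTr χ hinf l k ++ [ms2 χ hinf l k] := by
  intro k
  induction k with
  | zero => intro l; rfl
  | succ k ih =>
    intro l
    have h1 : CTr χ hinf l (k+1+1)
        = gstep χ hinf l :: CTr χ hinf ((Nat.unpair (gstep χ hinf l)).1) (k+1) := rfl
    have h2 : CTr χ hinf l (k+1)
        = gstep χ hinf l :: CTr χ hinf ((Nat.unpair (gstep χ hinf l)).1) k := rfl
    rw [h1, h2, ih, ms2_shift hinf]
    simp

lemma CTr_mem : ∀ (k l m : ℕ), m ∈ CTr χ hinf l k → ∃ i, i < k ∧ m = ms2 χ hinf l i := by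
  intro k
  induction k with
  | zero => intro l m h; simp [CTr] at h
  | succ k ih =>
    intro l m h
    rw [CTr, List.mem_cons] at h
    rcases h with rfl | h
    · exact ⟨0, Nat.succ_pos k, rfl⟩
    · obtain ⟨i, hik, rfl⟩ := ih _ _ h
      exact ⟨i+1, by omega, (ms2_shift hinf i l).symm⟩

lemma CTr_mem' : ∀ (k i l : ℕ), i < k → ms2 χ hinf l i ∈ CTr χ hinf l k := by
  intro k
  induction k with
  | zero => intro i l h; omega
  | succ k ih =>
    intro i l h
    rw [CTr]
    cases i with
    | zero => exact List.mem_cons_self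
    | succ i =>
      rw [ms2_shift hinf]
      exact List.mem_cons_of_mem _ (ih i _ (by omega))

/-- validity of a transcript -/
def VFP (χ : ℕ → ℕ → Bool) : ℕ → List ℕ → Prop
  | _, [] => True
  | l, m :: L => QB2 χ l m = true ∧ (∀ m' < m, QB2 χ l m' = false) ∧ VFP χ (Nat.unpair m).1 L

lemma VFP_CTr : ∀ (k l : ℕ), VFP χ l (CTr χ hinf l k) := by
  intro k
  induction k with
  | zero => intro l; trivial
  | succ k ih =>
    intro l
    exact ⟨gstep_spec hinf l, fun m' hm' => gstep_min hinf hm', ih _⟩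

lemma VFP_unique : ∀ (L : List ℕ) (l : ℕ), VFP χ l L → L = CTr χ hinf l L.length := by
  intro L
  induction L with
  | nil => intro l _; rfl
  | cons m L ih =>
    rintro l ⟨h1, h2, h3⟩
    have hm : gstep χ hinf l = m := by
      rw [gstep, Nat.find_eq_iff]
      exact ⟨h1, fun n hn => by rw [h2 n hn]; simp⟩
    show m :: L = gstep χ hinf l :: CTr χ hinf ((Nat.unpair (gstep χ hinf l)).1) L.length
    rw [hm]
    congr 1
    exact ih _ h3

/-- Boolean implementations -/
def QMinB (χ : ℕ → ℕ → Bool) (l m : ℕ) : Bool :=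
  QB2 χ l m && ((List.range m).foldr (fun m' r => !(QB2 χ l m') && r) true)

def VFstep (χ : ℕ → ℕ → Bool) : (ℕ × Bool) → ℕ → (ℕ × Bool) :=
  fun st m => ((Nat.unpair m).1, st.2 && QMinB χ st.1 m)

def VFB (χ : ℕ → ℕ → Bool) (L : List ℕ) : Bool := (L.foldl (VFstep χ) (0, true)).2

lemma foldr_and_true_iff {α : Type} (p : α → Bool) (l : List α) :
    (l.foldr (fun a r => p a && r) true) = true ↔ ∀ a ∈ l, p a = true := by
  induction l with
  | nil => simp
  | cons a l ih => simp [ih]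

lemma QMinB_iff (l m : ℕ) : QMinB χ l m = true ↔
    (QB2 χ l m = true ∧ ∀ m' < m, QB2 χ l m' = false) := by
  rw [QMinB, Bool.and_eq_true, foldr_and_true_iff]
  constructor
  · rintro ⟨h1, h2⟩
    refine ⟨h1, fun m' hm' => ?_⟩
    have := h2 m' (List.mem_range.2 hm')
    simpa using this
  · rintro ⟨h1, h2⟩
    refine ⟨h1, fun m' hm' => ?_⟩
    have := h2 m' (List.mem_range.1 hm')
    simp [this]

lemma VFB_state (L : List ℕ) : ∀ (l : ℕ) (b : Bool),
    (L.foldl (VFstep χ) (l, b)).2 = (b && (L.foldl (VFstep χ) (l, true)).2) := by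
  induction L with
  | nil => intro l b; simp
  | cons m L ih =>
    intro l b
    rw [List.foldl_cons, List.foldl_cons]
    show (L.foldl (VFstep χ) ((Nat.unpair m).1, b && QMinB χ l m)).2
      = (b && (L.foldl (VFstep χ) ((Nat.unpair m).1, true && QMinB χ l m)).2)
    rw [ih _ (b && QMinB χ l m), ih _ (true && QMinB χ l m)]
    cases b <;> cases QMinB χ l m <;> simp

lemma VFB_iff : ∀ (L : List ℕ) (l : ℕ),
    ((L.foldl (VFstep χ) (l, true)).2 = true) ↔ VFP χ l L := by
  intro L
  induction L with
  | nil => intro l; simp [VFP]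
  | cons m L ih =>
    intro l
    rw [List.foldl_cons]
    show (L.foldl (VFstep χ) ((Nat.unpair m).1, true && QMinB χ l m)).2 = true ↔ _
    rw [VFB_state L _ _, VFP]
    simp only [Bool.and_eq_true, true_and]
    rw [ih, QMinB_iff]
    tauto

/-- τ-side conditions -/
def TCondAux (bc : Bool) (τ : List Bool) : List ℕ → Bool
  | [] => false
  | m :: rest =>
      (decide (τ.length = (Nat.unpair m).1 + 1) &&
       decide (τ[(Nat.unpair m).1]? = some (!bc))) &&
      rest.foldr (fun m' r => decide (τ[(Nat.unpair m').1]? = some bc) && r) true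

def TCond (bc : Bool) (τ : List Bool) (L : List ℕ) : Bool := TCondAux bc τ L.reverse

def TCheckB (χ : ℕ → ℕ → Bool) (bc : Bool) (τ : List Bool) (w : ℕ) : Bool :=
  VFB χ (Denumerable.ofNat (List ℕ) w) && TCond bc τ (Denumerable.ofNat (List ℕ) w)

lemma TCheck_iff (bc : Bool) (τ : List Bool) :
    (∃ w, TCheckB χ bc τ w = true) ↔ τ ∈ testSf (fd χ hinf) bc := by
  constructor
  · rintro ⟨w, hw⟩
    rw [TCheckB, Bool.and_eq_true] at hw
    obtain ⟨h1, h2⟩ := hw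
    set L := Denumerable.ofNat (List ℕ) w with hLdef
    have hVF : VFP χ 0 L := (VFB_iff L 0).1 h1
    have hL : L = CTr χ hinf 0 L.length := VFP_unique hinf L 0 hVF
    rw [TCond] at h2
    cases hrev : L.reverse with
    | nil => rw [hrev] at h2; simp [TCondAux] at h2
    | cons m rest =>
      rw [hrev] at h2
      set t := rest.length with ht
      have hLlen : L.length = t + 1 := by
        rw [← (List.length_reverse : L.reverse.length = L.length), hrev]
        simp [ht]
      have hLdec : L = CTr χ hinf 0 t ++ [ms2 χ hinf 0 t] := by
        rw [hL, hLlen]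
        exact CTr_append hinf t 0
      have hrev2 : m :: rest = ms2 χ hinf 0 t :: (CTr χ hinf 0 t).reverse := by
        rw [← hrev, hLdec]
        simp
      have hm : m = ms2 χ hinf 0 t := by injection hrev2
      have hrest : rest = (CTr χ hinf 0 t).reverse := by injection hrev2
      rw [TCondAux, Bool.and_eq_true, Bool.and_eq_true] at h2
      obtain ⟨⟨hlen, hlast⟩, hall⟩ := h2
      rw [decide_eq_true_iff] at hlen hlast
      refine ⟨t, ?_, ?_, ?_⟩
      · rw [hlen, hm]; rfl
      · intro u hu
        rw [foldr_and_true_iff] at hall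
        have hmem : ms2 χ hinf 0 u ∈ rest := by
          rw [hrest, List.mem_reverse]
          exact CTr_mem' hinf t u 0 hu
        have := hall _ hmem
        rwa [decide_eq_true_iff] at this
      · rw [hm] at hlast; exact hlast
  · rintro ⟨t, hlen, hmid, hlast⟩
    refine ⟨Encodable.encode (CTr χ hinf 0 (t+1)), ?_⟩
    rw [TCheckB, Denumerable.ofNat_encode, Bool.and_eq_true]
    constructor
    · exact (VFB_iff _ _).2 (VFP_CTr hinf _ _)
    · rw [TCond]
      have hrev : (CTr χ hinf 0 (t+1)).reverse
          = ms2 χ hinf 0 t :: (CTr χ hinf 0 t).reverse := by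
        rw [CTr_append hinf t 0]
        simp
      rw [hrev, TCondAux, Bool.and_eq_true, Bool.and_eq_true]
      refine ⟨⟨decide_eq_true hlen, decide_eq_true hlast⟩, ?_⟩
      rw [foldr_and_true_iff]
      intro m hm
      rw [List.mem_reverse] at hm
      obtain ⟨i, hik, rfl⟩ := CTr_mem hinf t 0 m hm
      exact decide_eq_true (hmid i hik)

end Machine

section Final

lemma primrec_band {α : Type} [Primcodable α] {f g : α → Bool}
    (hf : Primrec f) (hg : Primrec g) : Primrec fun a => f a && g a :=
  (Primrec.cond hf hg (Primrec.const false)).of_eq fun a => by cases h : f a <;> simp [h]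

lemma primrec_bnot {α : Type} [Primcodable α] {f : α → Bool}
    (hf : Primrec f) : Primrec fun a => !(f a) :=
  (Primrec.cond hf (Primrec.const false) (Primrec.const true)).of_eq
    fun a => by cases h : f a <;> simp [h]

variable {χ : ℕ → ℕ → Bool}

lemma QB2_primrec (hχ : Primrec fun p : ℕ × ℕ => χ p.1 p.2) :
    Primrec fun p : ℕ × ℕ => QB2 χ p.1 p.2 := by
  have h1 : Primrec fun p : ℕ × ℕ => decide (p.1 < (Nat.unpair p.2).1) :=
    PrimrecPred.decide (Primrec.nat_lt.comp Primrec.fst (Primrec.fst.comp (Primrec.unpair.comp Primrec.snd)))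
  have h2 : Primrec fun p : ℕ × ℕ => χ (Nat.unpair p.2).1 (Nat.unpair p.2).2 :=
    hχ.comp (Primrec.pair (Primrec.fst.comp (Primrec.unpair.comp Primrec.snd))
      (Primrec.snd.comp (Primrec.unpair.comp Primrec.snd)))
  exact (primrec_band h1 h2).of_eq fun p => rfl

lemma QMinB_primrec (hχ : Primrec fun p : ℕ × ℕ => χ p.1 p.2) :
    Primrec fun p : ℕ × ℕ => QMinB χ p.1 p.2 := by
  have hQ := QB2_primrec hχ
  have hstep : Primrec fun z : (ℕ × ℕ) × (ℕ × Bool) => !(QB2 χ z.1.1 z.2.1) && z.2.2 :=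
    primrec_band
      (primrec_bnot (hQ.comp (Primrec.pair (Primrec.fst.comp Primrec.fst)
        (Primrec.fst.comp Primrec.snd))))
      (Primrec.snd.comp Primrec.snd)
  have hfold : Primrec fun p : ℕ × ℕ =>
      (List.range p.2).foldr (fun m' r => !(QB2 χ p.1 m') && r) true :=
    Primrec.list_foldr (Primrec.list_range.comp Primrec.snd) (Primrec.const true) hstep.to₂
  exact (primrec_band hQ hfold).of_eq fun p => rfl

lemma VFB_primrec (hχ : Primrec fun p : ℕ × ℕ => χ p.1 p.2) : Primrec (VFB χ) := by
  have hstep : Primrec fun z : List ℕ × ((ℕ × Bool) × ℕ) => VFstep χ z.2.1 z.2.2 := by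
    have h1 : Primrec fun z : List ℕ × ((ℕ × Bool) × ℕ) => (Nat.unpair z.2.2).1 :=
      Primrec.fst.comp (Primrec.unpair.comp (Primrec.snd.comp Primrec.snd))
    have h2 : Primrec fun z : List ℕ × ((ℕ × Bool) × ℕ) =>
        (z.2.1.2 && QMinB χ z.2.1.1 z.2.2) :=
      primrec_band (Primrec.snd.comp (Primrec.fst.comp Primrec.snd))
        ((QMinB_primrec hχ).comp (Primrec.pair (Primrec.fst.comp (Primrec.fst.comp Primrec.snd))
          (Primrec.snd.comp Primrec.snd)))
    exact Primrec.pair h1 h2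
  have hfold : Primrec fun L : List ℕ => L.foldl (fun st m => VFstep χ st m) ((0:ℕ), true) :=
    Primrec.list_foldl Primrec.id (Primrec.const ((0:ℕ), true)) hstep.to₂
  exact (Primrec.snd.comp hfold).of_eq fun L => rfl

lemma TCond_primrec (bc : Bool) :
    Primrec fun q : List Bool × List ℕ => TCond bc q.1 q.2 := by
  have τpart : Primrec fun z : (List Bool × List ℕ) × (ℕ × List ℕ) => z.1.1 :=
    Primrec.fst.comp Primrec.fst
  have mpos : Primrec fun z : (List Bool × List ℕ) × (ℕ × List ℕ) => (Nat.unpair z.2.1).1 :=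
    Primrec.fst.comp (Primrec.unpair.comp (Primrec.fst.comp Primrec.snd))
  have e1 : Primrec fun z : (List Bool × List ℕ) × (ℕ × List ℕ) =>
      decide (z.1.1.length = (Nat.unpair z.2.1).1 + 1) :=
    PrimrecPred.decide (Primrec.eq.comp (Primrec.list_length.comp τpart) (Primrec.succ.comp mpos))
  have e2 : Primrec fun z : (List Bool × List ℕ) × (ℕ × List ℕ) =>
      decide (z.1.1[(Nat.unpair z.2.1).1]? = some (!bc)) :=
    PrimrecPred.decide (Primrec.eq.comp (Primrec.list_getElem?.comp τpart mpos) (Primrec.const (some (!bc))))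
  have hh' : Primrec fun y : ((List Bool × List ℕ) × (ℕ × List ℕ)) × (ℕ × Bool) =>
      (decide (y.1.1.1[(Nat.unpair y.2.1).1]? = some bc) && y.2.2) :=
    primrec_band
      (Primrec.eq.comp
        (Primrec.list_getElem?.comp (Primrec.fst.comp (Primrec.fst.comp Primrec.fst))
          (Primrec.fst.comp (Primrec.unpair.comp (Primrec.fst.comp Primrec.snd))))
        (Primrec.const (some bc))).decide
      (Primrec.snd.comp Primrec.snd)
  have e3 : Primrec fun z : (List Bool × List ℕ) × (ℕ × List ℕ) =>
      z.2.2.foldr (fun m' r => decide (z.1.1[(Nat.unpair m').1]? = some bc) && r) true :=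
    Primrec.list_foldr (Primrec.snd.comp Primrec.snd) (Primrec.const true) hh'.to₂
  have hh : Primrec fun z : (List Bool × List ℕ) × (ℕ × List ℕ) =>
      ((decide (z.1.1.length = (Nat.unpair z.2.1).1 + 1) &&
        decide (z.1.1[(Nat.unpair z.2.1).1]? = some (!bc))) &&
       z.2.2.foldr (fun m' r => decide (z.1.1[(Nat.unpair m').1]? = some bc) && r) true) :=
    primrec_band (primrec_band e1 e2) e3
  have hcases := Primrec.list_casesOn (f := fun q : List Bool × List ℕ => q.2.reverse)
    (Primrec.list_reverse.comp Primrec.snd) (Primrec.const false) hh.to₂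
  refine hcases.of_eq fun q => ?_
  beta_reduce
  rw [TCond]
  cases hq : q.2.reverse with
  | nil => rfl
  | cons m rest => rfl

lemma TCheckB_primrec (hχ : Primrec fun p : ℕ × ℕ => χ p.1 p.2) (bc : Bool) :
    Primrec fun q : List Bool × ℕ => TCheckB χ bc q.1 q.2 := by
  have hofn : Primrec fun q : List Bool × ℕ => Denumerable.ofNat (List ℕ) q.2 :=
    (Primrec.ofNat (List ℕ)).comp Primrec.snd
  exact (primrec_band ((VFB_primrec hχ).comp hofn)
    ((TCond_primrec bc).comp (Primrec.pair Primrec.fst hofn))).of_eq fun q => rfl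

lemma testSf_CE (hinf : {j | ∃ s, χ j s = true}.Infinite)
    (hχ : Primrec fun p : ℕ × ℕ => χ p.1 p.2) (bc : Bool) :
    CE (testSf (fd χ hinf) bc) := by
  have hcomp : Computable fun q : List Bool × ℕ => TCheckB χ bc q.1 q.2 :=
    (TCheckB_primrec hχ bc).to_comp
  have h2 : Partrec₂ fun (τ : List Bool) (w : ℕ) =>
      (Part.some (TCheckB χ bc τ w) : Part Bool) := hcomp
  have hrf := Partrec.rfind h2
  have hmap := hrf.map (Primrec₂.to_comp (Primrec₂.const ()))
  refine hmap.of_eq fun τ => ?_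
  apply Part.ext
  intro u
  rw [Part.mem_map_iff, Part.mem_assert_iff]
  constructor
  · rintro ⟨n, hn, _⟩
    have h1 := Nat.rfind_spec hn
    rw [Part.mem_some_iff] at h1
    refine ⟨(TCheck_iff hinf bc τ).1 ⟨n, h1.symm⟩, ?_⟩
    exact Part.mem_some_iff.2 rfl
  · rintro ⟨hτ, hu⟩
    obtain ⟨w, hw⟩ := (TCheck_iff hinf bc τ).2 hτ
    have hex : ∃ w, TCheckB χ bc τ w = true := ⟨w, hw⟩
    refine ⟨Nat.find hex, ?_, rfl⟩
    refine Nat.mem_rfind.2 ?_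
    constructor
    · exact Part.mem_some_iff.2 (Nat.find_spec hex).symm
    · intro m hm
      exact Part.mem_some_iff.2 (Bool.eq_false_iff.mpr (Nat.find_min hex hm)).symm

lemma key_not_kurtz (x : ℕ → Bool) (χ : ℕ → ℕ → Bool) (bc : Bool)
    (hχ : Primrec fun p : ℕ × ℕ => χ p.1 p.2)
    (hsound : ∀ j s, χ j s = true → x j = bc)
    (hinf : {j | ∃ s, χ j s = true}.Infinite) : ¬ KurtzRandom x := by
  intro hK
  obtain ⟨σ, hσS, hσpre⟩ := hK (testSf (fd χ hinf) bc) (testSf_CE hinf hχ bc)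
    (testSf_prefix_free _ (fd_mono hinf) bc) (testSf_tsum (fd_mono hinf) (fd0_pos hinf))
  exact testSf_avoids x _ bc (fd_sound hinf hsound) σ hσS hσpre

end Final

/-- no regular real is Kurtz random. -/
theorem not_kurtzRandom_of_regular (x : ℕ → Bool) (h : RegularReal (binVal x)) :
    ¬ KurtzRandom x := by
  obtain ⟨χ, bc, hχ, hsound, hinf⟩ := exists_chi x h
  exact key_not_kurtz x χ bc hχ hsound hinf

end Paper
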